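/- arXiv:1901.00693 — 2 statements merged into one kernel-verified Lean document; each statement's English description precedes it below -/
import Mathlib

section
/- If unit vectors z⁽¹⁾,…,z⁽ᵐ⁾ maximize f(z) = Re⟨𝒜, ⊗_{i=1}^m z⁽ⁱ⁾⟩ over the product of unit spheres and λ denotes the maximum value, then for each k = 1,…,m, ⟨𝒜, ⊗_{i≠k} z⁽ⁱ⁾⟩ = λ (z⁽ᵏ⁾)*; that is, λ is a U-eigenvalue of 𝒜 with U-eigenvector tuple (z⁽¹⁾,…,z⁽ᵐ⁾). -/
/-! Freezing every factor of a maximizer `ẑ` but the `k`-th leaves the function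
`v ↦ Re ⟪x, v⟫` with `x = ⟨A, ⊗_{i≠k} ẑ⁽ⁱ⁾⟩*`, which `ẑ⁽ᵏ⁾` maximizes on the unit sphere of
`ℂ^{n_k}` with value `λ`. Testing it at `x / ‖x‖` gives `‖x‖ ≤ λ`, and then
`‖x - λ ẑ⁽ᵏ⁾‖² = ‖x‖² - λ² ≤ 0`. -/

open Finset Complex

/-- Full Hermitian contraction of two complex tensors: `⟨A,B⟩ = Σ conj(A) * B`. -/
noncomputable def tinner {m : ℕ} {n : Fin m → ℕ} (A B : (∀ i : Fin m, Fin (n i)) → ℂ) : ℂ :=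
  ∑ idx : ∀ i : Fin m, Fin (n i), (starRingEnd ℂ) (A idx) * B idx

/-- The rank-one tensor `⊗ᵢ z⁽ⁱ⁾`. -/
noncomputable def otimes {m : ℕ} {n : Fin m → ℕ} (z : ∀ i : Fin m, Fin (n i) → ℂ) :
    (∀ i : Fin m, Fin (n i)) → ℂ :=
  fun idx => ∏ i, z i (idx i)

/-- `z` is a unit vector in `ℂ^k`. -/
def IsUnitVec {k : ℕ} (z : Fin k → ℂ) : Prop := ∑ j, Complex.normSq (z j) = 1

/-- The vector `⟨A, ⊗_{i≠k} z⁽ⁱ⁾⟩ ∈ ℂ^{n_k}`: contraction of `A` against all but the k-th vector. -/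
noncomputable def contraK {m : ℕ} {n : Fin m → ℕ} (A : (∀ i : Fin m, Fin (n i)) → ℂ)
    (z : ∀ i : Fin m, Fin (n i) → ℂ) (k : Fin m) (j : Fin (n k)) : ℂ :=
  ∑ idx : ∀ i : Fin m, Fin (n i),
    if idx k = j then (starRingEnd ℂ) (A idx) * ∏ i ∈ Finset.univ.erase k, z i (idx i) else 0

/-- `(lam, z)` is a U-eigenpair of `A`: all `z⁽ⁱ⁾` are unit vectors and
`⟨A, ⊗_{i≠k} z⁽ⁱ⁾⟩ = lam (z⁽ᵏ⁾)*` for every `k`. -/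
def IsUEigenpair {m : ℕ} {n : Fin m → ℕ} (A : (∀ i : Fin m, Fin (n i)) → ℂ) (lam : ℝ)
    (z : ∀ i : Fin m, Fin (n i) → ℂ) : Prop :=
  (∀ i, IsUnitVec (z i)) ∧ ∀ k : Fin m, ∀ j : Fin (n k),
    contraK A z k j = (lam : ℂ) * (starRingEnd ℂ) (z k j)

/-- `lam` is a U-eigenvalue of `A`. -/
def IsUEigenvalue {m : ℕ} {n : Fin m → ℕ} (A : (∀ i : Fin m, Fin (n i)) → ℂ) (lam : ℝ) : Prop :=
  ∃ z, IsUEigenpair A lam z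

section InnerProductSpace

variable {𝕜 E : Type*} [RCLike 𝕜] [NormedAddCommGroup E] [InnerProductSpace 𝕜 E]

theorem norm_le_re_inner_of_isMaxOn_sphere {x u : E}
    (hmax : IsMaxOn (fun v => RCLike.re (inner 𝕜 x v)) (Metric.sphere 0 1) u) :
    ‖x‖ ≤ RCLike.re (inner 𝕜 x u) := by
  rcases eq_or_ne x 0 with rfl | hx
  · simp
  have hx' : ‖x‖ ≠ 0 := norm_ne_zero_iff.mpr hx
  have hv : ((‖x‖⁻¹ : ℝ) : 𝕜) • x ∈ Metric.sphere (0 : E) 1 := by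
    simp [norm_smul, hx']
  calc ‖x‖ = RCLike.re (inner 𝕜 x (((‖x‖⁻¹ : ℝ) : 𝕜) • x)) := by
        rw [inner_smul_right, inner_self_eq_norm_sq_to_K, ← RCLike.ofReal_pow,
          ← RCLike.ofReal_mul, RCLike.ofReal_re]
        field_simp
    _ ≤ RCLike.re (inner 𝕜 x u) := hmax hv

theorem eq_re_inner_smul_of_isMaxOn_sphere {x u : E} (hu : u ∈ Metric.sphere (0 : E) 1)
    (hmax : IsMaxOn (fun v => RCLike.re (inner 𝕜 x v)) (Metric.sphere 0 1) u) :
    x = ((RCLike.re (inner 𝕜 x u) : ℝ) : 𝕜) • u := by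
  set c := RCLike.re (inner 𝕜 x u)
  have hu1 : ‖u‖ = 1 := mem_sphere_zero_iff_norm.mp hu
  have hxc : ‖x‖ ≤ c := norm_le_re_inner_of_isMaxOn_sphere hmax
  have hdist : ‖x - (c : 𝕜) • u‖ ^ 2 = ‖x‖ ^ 2 - c ^ 2 := by
    rw [norm_sub_sq (𝕜 := 𝕜), inner_smul_right, RCLike.re_ofReal_mul, norm_smul,
      RCLike.norm_ofReal, hu1]
    simp only [mul_one, sq_abs]
    ring
  have : ‖x - (c : 𝕜) • u‖ ^ 2 = 0 := by nlinarith [norm_nonneg x, sq_nonneg ‖x - (c : 𝕜) • u‖]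
  simpa [sub_eq_zero] using this

end InnerProductSpace

theorem isUnitVec_iff_norm_toLp {N : ℕ} (v : Fin N → ℂ) :
    IsUnitVec v ↔ ‖WithLp.toLp 2 v‖ = 1 := by
  rw [EuclideanSpace.norm_eq, Real.sqrt_eq_one, IsUnitVec]
  simp [Complex.sq_norm]

section Contraction

variable {m : ℕ} {n : Fin m → ℕ} (A : (∀ i : Fin m, Fin (n i)) → ℂ)
  (z : ∀ i : Fin m, Fin (n i) → ℂ) (k : Fin m)

theorem sum_contraK_mul : ∑ j, contraK A z k j * z k j = tinner A (otimes z) := by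
  simp only [contraK, tinner, otimes, Finset.sum_mul, ite_mul, zero_mul]
  rw [Finset.sum_comm]
  refine Finset.sum_congr rfl fun idx _ => ?_
  rw [Finset.sum_ite_eq, if_pos (Finset.mem_univ _),
    ← Finset.mul_prod_erase Finset.univ (fun i => z i (idx i)) (Finset.mem_univ k)]
  ring

theorem contraK_update_self (v : Fin (n k) → ℂ) :
    contraK A (Function.update z k v) k = contraK A z k := by
  funext j
  refine Finset.sum_congr rfl fun idx _ => ?_
  congr 2
  refine Finset.prod_congr rfl fun i hi => ?_
  rw [Function.update_of_ne (Finset.ne_of_mem_erase hi)]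

theorem tinner_otimes_update (v : Fin (n k) → ℂ) :
    tinner A (otimes (Function.update z k v)) = ∑ j, contraK A z k j * v j := by
  rw [← sum_contraK_mul, contraK_update_self, Function.update_self]

theorem inner_toLp_conj_contraK (v : Fin (n k) → ℂ) :
    inner ℂ (WithLp.toLp 2 fun j => starRingEnd ℂ (contraK A z k j)) (WithLp.toLp 2 v) =
      tinner A (otimes (Function.update z k v)) := by
  simp [tinner_otimes_update, PiLp.inner_apply, mul_comm]

end Contraction

/-- If unit vectors `z⁽¹⁾,…,z⁽ᵐ⁾` maximize `Re⟨A, ⊗z⁽ⁱ⁾⟩` over the product of unit spheres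
with maximal value `lam`, then `(lam, z)` is a U-eigenpair of `A`. -/
theorem maximizer_isUEigenpair {m : ℕ} {n : Fin m → ℕ} (A : (∀ i : Fin m, Fin (n i)) → ℂ)
    (zh : ∀ i : Fin m, Fin (n i) → ℂ) (hzh : ∀ i, IsUnitVec (zh i)) (lam : ℝ)
    (hval : lam = (tinner A (otimes zh)).re)
    (hmax : ∀ z, (∀ i, IsUnitVec (z i)) → (tinner A (otimes z)).re ≤ lam) :
    IsUEigenpair A lam zh := by
  refine ⟨hzh, fun k j => ?_⟩
  set x : EuclideanSpace ℂ (Fin (n k)) := WithLp.toLp 2 fun j => starRingEnd ℂ (contraK A zh k j)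
  set u : EuclideanSpace ℂ (Fin (n k)) := WithLp.toLp 2 (zh k)
  have hu : u ∈ Metric.sphere 0 1 :=
    mem_sphere_zero_iff_norm.mpr ((isUnitVec_iff_norm_toLp _).mp (hzh k))
  have hxu : RCLike.re (inner ℂ x u) = lam := by
    rw [inner_toLp_conj_contraK, Function.update_eq_self, hval]; rfl
  have hxmax : IsMaxOn (fun v => RCLike.re (inner ℂ x v)) (Metric.sphere 0 1) u := by
    intro v hv
    change RCLike.re (inner ℂ x v) ≤ RCLike.re (inner ℂ x u)
    rw [hxu, ← WithLp.toLp_ofLp (p := 2) v, inner_toLp_conj_contraK]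
    refine hmax _ fun i => ?_
    rcases eq_or_ne i k with rfl | hik
    · simpa [isUnitVec_iff_norm_toLp] using hv
    · simpa [Function.update_of_ne hik] using hzh i
  have hcoord := congrArg (fun y : EuclideanSpace ℂ (Fin (n k)) => starRingEnd ℂ (y j))
    (eq_re_inner_smul_of_isMaxOn_sphere hu hxmax)
  simpa [x, u, hxu] using hcoord
end

section
/- Let ℬ ∈ ℝ^{2n₁×⋯×2n_m} be the real tensor defined by ⟨ℬ, ⊗_{i=1}^m u⁽ⁱ⁾⟩ = Re⟨𝒜, ⊗_{i=1}^m (x⁽ⁱ⁾ + √−1 y⁽ⁱ⁾)⟩ where u⁽ⁱ⁾ = (x⁽ⁱ⁾, y⁽ⁱ⁾) ∈ ℝ^{2n_i}. Then the maximum of Re⟨𝒜, ⊗ z⁽ⁱ⁾⟩ over complex unit vectors z⁽ⁱ⁾ ∈ ℂ^{n_i} equals the maximum of ⟨ℬ, ⊗ u⁽ⁱ⁾⟩ over real unit vectors u⁽ⁱ⁾ ∈ ℝ^{2n_i}. -/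
open Finset Complex

/-- The complex vector `x + √−1 y` built from the real vector `u = (x, y) ∈ ℝ^{2k}`
(first block real part, second block imaginary part). -/
noncomputable def toC {k : ℕ} (u : Fin k ⊕ Fin k → ℝ) : Fin k → ℂ :=
  fun j => ⟨u (Sum.inl j), u (Sum.inr j)⟩

/-- `u` is a real unit vector. -/
def IsRUnitVec {α : Type*} [Fintype α] (u : α → ℝ) : Prop := ∑ j, (u j) ^ 2 = 1

/-- The full real multilinear contraction `⟨B, ⊗ᵢ u⁽ⁱ⁾⟩ = Σ B_{j₁…j_m} ∏ u⁽ⁱ⁾_{j_i}`. -/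
noncomputable def rform {m : ℕ} {N : Fin m → Type*} [∀ i, Fintype (N i)]
    (B : (∀ i : Fin m, N i) → ℝ) (u : ∀ i : Fin m, N i → ℝ) : ℝ :=
  ∑ idx : ∀ i : Fin m, N i, B idx * ∏ i, u i (idx i)

/-- If `B ∈ ℝ^{2n₁×⋯×2n_m}` is the real representation of the complex tensor `A`, i.e.
`⟨B, ⊗u⁽ⁱ⁾⟩ = Re⟨A, ⊗(x⁽ⁱ⁾+√−1 y⁽ⁱ⁾)⟩` for all real `u⁽ⁱ⁾ = (x⁽ⁱ⁾,y⁽ⁱ⁾)`, then the maximum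
of `Re⟨A, ⊗z⁽ⁱ⁾⟩` over complex unit vectors equals the maximum of `⟨B, ⊗u⁽ⁱ⁾⟩` over real
unit vectors. -/
theorem isGreatest_complex_iff_isGreatest_real {m : ℕ} {n : Fin m → ℕ}
    (A : (∀ i : Fin m, Fin (n i)) → ℂ)
    (B : (∀ i : Fin m, Fin (n i) ⊕ Fin (n i)) → ℝ)
    (hB : ∀ u : ∀ i : Fin m, Fin (n i) ⊕ Fin (n i) → ℝ,
      rform B u = (tinner A (otimes fun i => toC (u i))).re) (v : ℝ) :
    IsGreatest {r : ℝ | ∃ z, (∀ i, IsUnitVec (z i)) ∧ r = (tinner A (otimes z)).re} v ↔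
    IsGreatest {r : ℝ | ∃ u : ∀ i : Fin m, Fin (n i) ⊕ Fin (n i) → ℝ,
      (∀ i, IsRUnitVec (u i)) ∧ r = rform B u} v := by
  have hset : {r : ℝ | ∃ z, (∀ i, IsUnitVec (z i)) ∧ r = (tinner A (otimes z)).re} =
      {r : ℝ | ∃ u : ∀ i : Fin m, Fin (n i) ⊕ Fin (n i) → ℝ,
        (∀ i, IsRUnitVec (u i)) ∧ r = rform B u} := by
    ext r
    constructor
    · rintro ⟨z, hz, rfl⟩
      refine ⟨fun i => Sum.elim (fun j => (z i j).re) (fun j => (z i j).im), ?_, ?_⟩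
      · intro i
        have := hz i
        unfold IsUnitVec at this
        unfold IsRUnitVec
        rw [Fintype.sum_sum_type]
        simp only [Sum.elim_inl, Sum.elim_inr]
        rw [← this]
        rw [← Finset.sum_add_distrib]
        exact Finset.sum_congr rfl fun j _ => by
          rw [Complex.normSq_apply]; ring
      · rw [hB]
        have : (fun i => toC (Sum.elim (fun j => (z i j).re) (fun j => (z i j).im))) = z := by
          funext i j
          simp [toC, Complex.ext_iff]
        rw [this]
    · rintro ⟨u, hu, rfl⟩
      refine ⟨fun i => toC (u i), fun i => ?_, hB u⟩
      have := hu i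
      unfold IsRUnitVec at this
      unfold IsUnitVec
      rw [Fintype.sum_sum_type] at this
      rw [← this, ← Finset.sum_add_distrib]
      exact Finset.sum_congr rfl fun j _ => by
        rw [Complex.normSq_apply]; simp [toC]; ring
  rw [IsGreatest, IsGreatest, hset]
end
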